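/- Let G be a Tanner graph with a rooted tree decomposition, let t be a join node with children t1 and t2 (B_t = B_{t1} = B_{t2}), and fix R' ⊆ B_t^c and a nonempty Q ⊆ B_t^v. Then the map (S_{t1}, S_{t2}) ↦ S_{t1} ∪ S_{t2} is a bijection from the set of pairs (S_{t1}, S_{t2}) such that, for some R_{t1}, R_{t2} with R_{t1} ⊕ R_{t2} ⊕ Γ_o(G_t[Q ∪ B_t^c]) = R', S_{t1} is a trapping set with parameters (R_{t1},Q) in G_{t1} and S_{t2} is a trapping set with parameters (R_{t2},Q) in G_{t2}, onto the set of trapping sets with parameters (R',Q) in G_t; moreover every such pair satisfies |S_{t1} ∪ S_{t2}| = |S_{t1}| + |S_{t2}| − |Q|. -/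

import Mathlib

/-- A Tanner graph: a bipartite graph on vertex set `V` partitioned into
variable nodes `L` and check nodes `R`, every edge joining `L` and `R`. -/
structure TannerGraph (V : Type*) where
  G : SimpleGraph V
  L : Set V
  R : Set V
  disj : Disjoint L R
  cover : L ∪ R = Set.univ
  bipartite : ∀ ⦃u v⦄, G.Adj u v → (u ∈ L ∧ v ∈ R) ∨ (u ∈ R ∧ v ∈ L)

/-- `Γ_o(G[S])`: check nodes having an odd number of neighbours in `S`. -/
def TannerGraph.Gamma {V : Type*} (TG : TannerGraph V) (S : Set V) : Set V :=
  {c | c ∈ TG.R ∧ Odd ((TG.G.neighborSet c ∩ S).ncard)}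

/-- A rooted tree decomposition of the graph `G`: `T` is a finite tree with
root `root` and bags `B i ⊆ V` covering all vertices and edges, such that for
every vertex the set of bags containing it induces a connected subgraph of `T`. -/
structure IsRootedTreeDecomp {V ι : Type*} (G : SimpleGraph V)
    (T : SimpleGraph ι) (root : ι) (B : ι → Set V) : Prop where
  isTree : T.IsTree
  covers : ∀ v, ∃ i, v ∈ B i
  coversEdge : ∀ ⦃u v⦄, G.Adj u v → ∃ i, u ∈ B i ∧ v ∈ B i
  connBags : ∀ v, (T.induce {i | v ∈ B i}).Connected

/-- `Desc T root t i`: `i` is a descendant of `t` in the tree `T` rooted at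
`root`, i.e. `t` lies on a path from the root to `i` (`t` itself included). -/
def Desc {ι : Type*} (T : SimpleGraph ι) (root : ι) (t i : ι) : Prop :=
  ∃ p : T.Walk root i, p.IsPath ∧ t ∈ p.support

/-- `IsChildOf T root s t`: `s` is a child of `t` in the rooted tree. -/
def IsChildOf {ι : Type*} (T : SimpleGraph ι) (root : ι) (s t : ι) : Prop :=
  T.Adj t s ∧ Desc T root t s

/-- `∪_{i ∈ T_t} B_i`: union of the bags over all descendants of `t`;
this is the vertex set of the induced subgraph `G_t`. -/
def subVerts {V ι : Type*} (T : SimpleGraph ι) (root : ι) (B : ι → Set V)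
    (t : ι) : Set V :=
  {v | ∃ i, Desc T root t i ∧ v ∈ B i}

/-- `Γ_o(G_t[S])`, where `W` is the vertex set of `G_t`: check nodes of `G_t`
having an odd number of `G_t`-neighbours in `S`. -/
def GammaLoc {V : Type*} (TG : TannerGraph V) (W S : Set V) : Set V :=
  {c | c ∈ TG.R ∧ c ∈ W ∧ Odd ((TG.G.neighborSet c ∩ W ∩ S).ncard)}

/-- `S` is a trapping set with parameters `(R', Q)` in `G_t`, where `W` is the
vertex set of `G_t` and `Bt` is the bag at `t`. -/
def HasParams {V : Type*} (TG : TannerGraph V) (W Bt S R' Q : Set V) : Prop :=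
  S.Nonempty ∧ S ⊆ W ∩ TG.L ∧ S ∩ (Bt ∩ TG.L) = Q ∧ GammaLoc TG W S = R'

/-- `S` is a trapping set with extended parameters `(I, Q, d)` in `G_t`. -/
def HasExtParams {V : Type*} (TG : TannerGraph V) (W Bt S I Q : Set V)
    (d : ℕ) : Prop :=
  S.Nonempty ∧ S ⊆ W ∩ TG.L ∧ S ∩ (Bt ∩ TG.L) = Q ∧
    GammaLoc TG W S ∩ (Bt ∩ TG.R) = I ∧ (GammaLoc TG W S \ (Bt ∩ TG.R)).ncard = d

/-- `Γ_o(G_t[Q ∪ B_t^c]) = {c ∈ B_t^c : |N_{G_t}(c) ∩ Q| is odd}`. -/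
def GammaBag {V : Type*} (TG : TannerGraph V) (W Bt Q : Set V) : Set V :=
  {c | c ∈ Bt ∩ TG.R ∧ Odd ((TG.G.neighborSet c ∩ W ∩ Q).ncard)}

/-!
At a join node the vertex sets `W₁`, `W₂` of `G_{t₁}`, `G_{t₂}` cover `G_t` and meet exactly in
the common bag `B_t`, with no edge between `W₁ \ B_t` and `W₂ \ B_t`: a vertex lying in a bag below
`t₁` and in a bag outside that subtree lies in `B_{t₁}`, because the bags containing it form a
subtree. Hence every trapping set `S` of `G_t` with `S ∩ B_t^v = Q` splits uniquely as
`(S ∩ W₁) ∪ (S ∩ W₂)` with overlap `Q`, and a check node counts the parity of its neighbours in `S`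
as the sum of the parities in the two halves, corrected on the bag by its neighbours in `Q`, which
both halves count.
-/

open SimpleGraph Walk

section RootedTree

variable {ι : Type*} {T : SimpleGraph ι} {root s t t₁ t₂ i k a b : ι}

noncomputable def rootPath (hT : T.IsTree) (root i : ι) : T.Walk root i :=
  (hT.existsUnique_path root i).exists.choose

lemma isPath_rootPath (hT : T.IsTree) (root i : ι) : (rootPath hT root i).IsPath :=
  (hT.existsUnique_path root i).exists.choose_spec

lemma eq_rootPath (hT : T.IsTree) {p : T.Walk root i} (hp : p.IsPath) : p = rootPath hT root i :=
  (hT.existsUnique_path root i).unique hp (isPath_rootPath hT root i)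

lemma desc_iff_mem_support (hT : T.IsTree) :
    Desc T root t i ↔ t ∈ (rootPath hT root i).support :=
  ⟨fun ⟨_, hp, ht⟩ => eq_rootPath hT hp ▸ ht, fun h => ⟨_, isPath_rootPath hT root i, h⟩⟩

lemma desc_iff_prefix (hT : T.IsTree) :
    Desc T root t i ↔ (rootPath hT root t).support <+: (rootPath hT root i).support := by
  classical
  rw [desc_iff_mem_support hT]
  refine ⟨fun h => ?_, fun h => h.subset (end_mem_support _)⟩
  rw [← eq_rootPath hT ((isPath_rootPath hT root i).takeUntil h)]
  exact support_takeUntil_prefix_support _ h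

lemma eq_of_support_rootPath_eq_concat (hT : T.IsTree) {l : List ι}
    (h : (rootPath hT root i).support = l ++ [a]) : i = a := by
  simpa [h] using ((rootPath hT root i).getLast_support).symm

lemma support_rootPath_of_adj (hT : T.IsTree) (h : T.Adj a b) :
    (rootPath hT root b).support = (rootPath hT root a).support ++ [b] ∨
      (rootPath hT root a).support = (rootPath hT root b).support ++ [a] := by
  classical
  set p := rootPath hT root a
  by_cases hb : b ∈ p.support
  · right
    have hp := isPath_rootPath hT root a
    have htake := eq_rootPath hT (hp.takeUntil hb)
    have hdrop : p.dropUntil b hb = cons h.symm nil :=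
      (hT.existsUnique_path b a).unique (hp.dropUntil hb) (by simp [h.ne'])
    rw [← p.take_spec hb, support_append, htake, hdrop]
    rfl
  · left
    rw [← eq_rootPath hT ((isPath_rootPath hT root a).concat hb h), support_concat]

lemma Desc.refl (hT : T.IsTree) (t : ι) : Desc T root t t :=
  (desc_iff_mem_support hT).2 (end_mem_support _)

lemma Desc.trans (hT : T.IsTree) (h₁ : Desc T root s t) (h₂ : Desc T root t i) :
    Desc T root s i := by
  rw [desc_iff_prefix hT] at *
  exact h₁.trans h₂

lemma IsChildOf.support_rootPath (hT : T.IsTree) (h : IsChildOf T root s t) :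
    (rootPath hT root s).support = (rootPath hT root t).support ++ [s] := by
  refine (support_rootPath_of_adj hT h.1).resolve_right fun h' => ?_
  have := ((desc_iff_prefix hT).1 h.2).length_le
  simp [h'] at this

lemma exists_isChildOf_of_desc (hT : T.IsTree) (h : Desc T root t i) (hne : t ≠ i) :
    ∃ s, IsChildOf T root s t ∧ Desc T root s i := by
  classical
  rw [desc_iff_mem_support hT] at h
  set p := rootPath hT root i
  have hp : p.IsPath := isPath_rootPath hT root i
  obtain ⟨s, hts, r, hr⟩ := exists_eq_cons_of_ne hne (p.dropUntil t h)
  have hsplit : ((p.takeUntil t h).concat hts).append r = p := by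
    rw [concat_append, ← hr, take_spec]
  have hpath : ((p.takeUntil t h).concat hts).IsPath := (hsplit ▸ hp).of_append_left
  refine ⟨s, ⟨hts, _, hpath, ?_⟩, p, hp, ?_⟩
  · simp
  · rw [← hsplit, mem_support_append_iff]
    exact Or.inr r.start_mem_support

lemma eq_of_adj_of_desc_of_not_desc (hT : T.IsTree) (hab : T.Adj a b) (ha : Desc T root s a)
    (hb : ¬ Desc T root s b) : s = a := by
  rw [desc_iff_prefix hT] at ha hb
  rcases support_rootPath_of_adj (root := root) hT hab with h | h
  · exact absurd (ha.trans (h ▸ List.prefix_append _ _)) hb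
  · rw [h, List.prefix_concat_iff] at ha
    exact eq_of_support_rootPath_eq_concat hT (ha.resolve_right hb)

lemma IsChildOf.eq_of_desc (hT : T.IsTree) (h₁ : IsChildOf T root t₁ t)
    (h₂ : IsChildOf T root t₂ t) (hk₁ : Desc T root t₁ k) (hk₂ : Desc T root t₂ k) :
    t₁ = t₂ := by
  rw [desc_iff_prefix hT, h₁.support_rootPath hT] at hk₁
  rw [desc_iff_prefix hT, h₂.support_rootPath hT] at hk₂
  simpa using (List.prefix_of_prefix_length_le hk₁ hk₂ (by simp)).eq_of_length (by simp)

end RootedTree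

section TreeDecomposition

variable {V ι : Type*} {G : SimpleGraph V} {T : SimpleGraph ι} {root s t t₁ t₂ i k : ι}
  {B : ι → Set V} {u v : V}

/-- The bags containing `v` form a connected subtree, and the only edge of `T` leaving the
subtree at `s` starts at `s`. -/
lemma mem_bag_of_desc_of_not_desc (hD : IsRootedTreeDecomp G T root B) (hi : Desc T root s i)
    (hvi : v ∈ B i) (hk : ¬ Desc T root s k) (hvk : v ∈ B k) : v ∈ B s := by
  obtain ⟨w⟩ := (hD.connBags v).preconnected ⟨i, hvi⟩ ⟨k, hvk⟩
  obtain ⟨d, -, hd₁, hd₂⟩ := w.exists_boundary_dart {j | Desc T root s j} hi hk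
  rw [eq_of_adj_of_desc_of_not_desc hD.isTree d.adj hd₁ hd₂]
  exact d.fst.2

lemma bag_subset_subVerts (hT : T.IsTree) : B t ⊆ subVerts T root B t :=
  fun _ hv => ⟨t, Desc.refl hT t, hv⟩

lemma subVerts_subset_of_desc (hT : T.IsTree) (h : Desc T root t s) :
    subVerts T root B s ⊆ subVerts T root B t :=
  fun _ ⟨i, hi, hv⟩ => ⟨i, h.trans hT hi, hv⟩

lemma subVerts_eq_union_of_isChildOf (hT : T.IsTree) (h₁ : IsChildOf T root t₁ t)
    (h₂ : IsChildOf T root t₂ t) (honly : ∀ s, IsChildOf T root s t → s = t₁ ∨ s = t₂)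
    (hB : B t = B t₁) :
    subVerts T root B t = subVerts T root B t₁ ∪ subVerts T root B t₂ := by
  refine subset_antisymm ?_ <|
    Set.union_subset (subVerts_subset_of_desc hT h₁.2) (subVerts_subset_of_desc hT h₂.2)
  rintro v ⟨i, hti, hvi⟩
  obtain rfl | hne := eq_or_ne t i
  · exact Or.inl (bag_subset_subVerts hT (hB ▸ hvi))
  obtain ⟨s, hs, hsi⟩ := exists_isChildOf_of_desc hT hti hne
  rcases honly s hs with rfl | rfl
  exacts [Or.inl ⟨i, hsi, hvi⟩, Or.inr ⟨i, hsi, hvi⟩]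

lemma subVerts_inter_subset_bag (hD : IsRootedTreeDecomp G T root B)
    (h₁ : IsChildOf T root t₁ t) (h₂ : IsChildOf T root t₂ t) (hne : t₁ ≠ t₂) :
    subVerts T root B t₁ ∩ subVerts T root B t₂ ⊆ B t₁ :=
  fun _ ⟨⟨_, hi, hvi⟩, ⟨_, hj, hvj⟩⟩ =>
    mem_bag_of_desc_of_not_desc hD hi hvi (fun hj' => hne (h₁.eq_of_desc hD.isTree h₂ hj' hj)) hvj

lemma mem_bag_of_adj (hD : IsRootedTreeDecomp G T root B) (h₁ : IsChildOf T root t₁ t)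
    (h₂ : IsChildOf T root t₂ t) (hne : t₁ ≠ t₂) (hu : u ∈ subVerts T root B t₁ \ B t₁)
    (hv : v ∈ subVerts T root B t₂) (huv : G.Adj u v) : v ∈ B t₁ := by
  obtain ⟨k, huk, hvk⟩ := hD.coversEdge huv
  obtain ⟨⟨i, hi, hui⟩, hut⟩ := hu
  have hk : Desc T root t₁ k := by
    by_contra hk
    exact hut (mem_bag_of_desc_of_not_desc hD hi hui hk huk)
  exact subVerts_inter_subset_bag hD h₁ h₂ hne ⟨⟨k, hk, hvk⟩, hv⟩

end TreeDecomposition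

def IsSeparation {V : Type*} (G : SimpleGraph V) (W₁ W₂ : Set V) : Prop :=
  ∀ u ∈ W₁ \ W₂, ∀ v ∈ W₂ \ W₁, ¬ G.Adj u v

lemma IsSeparation.symm {V : Type*} {G : SimpleGraph V} {W₁ W₂ : Set V}
    (h : IsSeparation G W₁ W₂) : IsSeparation G W₂ W₁ :=
  fun u hu v hv huv => h v hv u hu huv.symm

section JoinNode

variable {V ι : Type*} {G : SimpleGraph V} {T : SimpleGraph ι} {root t t₁ t₂ : ι}
  {B : ι → Set V}

lemma subVerts_inter_eq_bag (hD : IsRootedTreeDecomp G T root B) (h₁ : IsChildOf T root t₁ t)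
    (h₂ : IsChildOf T root t₂ t) (hne : t₁ ≠ t₂) (hB₁ : B t = B t₁) (hB₂ : B t = B t₂) :
    subVerts T root B t₁ ∩ subVerts T root B t₂ = B t :=
  subset_antisymm (hB₁ ▸ subVerts_inter_subset_bag hD h₁ h₂ hne) <|
    Set.subset_inter (hB₁ ▸ bag_subset_subVerts hD.isTree) (hB₂ ▸ bag_subset_subVerts hD.isTree)

lemma isSeparation_subVerts (hD : IsRootedTreeDecomp G T root B) (h₁ : IsChildOf T root t₁ t)
    (h₂ : IsChildOf T root t₂ t) (hne : t₁ ≠ t₂) (hB₁ : B t = B t₁) (hB₂ : B t = B t₂) :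
    IsSeparation G (subVerts T root B t₁) (subVerts T root B t₂) := by
  have hB := subVerts_inter_eq_bag hD h₁ h₂ hne hB₁ hB₂
  rw [hB₁] at hB
  intro u ⟨hu₁, hu₂⟩ v ⟨hv₂, hv₁⟩ huv
  have hv := mem_bag_of_adj hD h₁ h₂ hne ⟨hu₁, fun hu => hu₂ (hB ▸ hu).2⟩ hv₂ huv
  exact hv₁ (hB ▸ hv).1

end JoinNode

section TannerJoin

variable {V : Type*} {TG : TannerGraph V} {W W₁ W₂ B Q S S₁ S₂ : Set V} {c : V}

lemma mem_gammaLoc_iff (hS : S ⊆ W) :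
    c ∈ GammaLoc TG W S ↔ c ∈ TG.R ∧ c ∈ W ∧ Odd (TG.G.neighborSet c ∩ S).ncard := by
  rw [GammaLoc, Set.mem_ofPred_eq, Set.inter_assoc, Set.inter_eq_right.2 hS]

lemma mem_gammaBag_iff (hQ : Q ⊆ W) :
    c ∈ GammaBag TG W B Q ↔ c ∈ B ∩ TG.R ∧ Odd (TG.G.neighborSet c ∩ Q).ncard := by
  rw [GammaBag, Set.mem_ofPred_eq, Set.inter_assoc, Set.inter_eq_right.2 hQ]

lemma inter_subset_of_inter_eq (hB : W₁ ∩ W₂ = B) (h₂ : S₂ ⊆ W₂ ∩ TG.L)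
    (hQ₂ : S₂ ∩ (B ∩ TG.L) = Q) : S₂ ∩ W₁ ⊆ Q := fun _ ⟨hv, hv₁⟩ =>
  hQ₂ ▸ ⟨hv, hB ▸ ⟨hv₁, (h₂ hv).1⟩, (h₂ hv).2⟩

lemma union_inter_eq_left (hB : W₁ ∩ W₂ = B) (h₁ : S₁ ⊆ W₁ ∩ TG.L) (h₂ : S₂ ⊆ W₂ ∩ TG.L)
    (hQ₁ : S₁ ∩ (B ∩ TG.L) = Q) (hQ₂ : S₂ ∩ (B ∩ TG.L) = Q) : (S₁ ∪ S₂) ∩ W₁ = S₁ := by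
  rw [Set.union_inter_distrib_right, Set.inter_eq_left.2 fun _ hv => (h₁ hv).1,
    Set.union_eq_left.2 ((inter_subset_of_inter_eq hB h₂ hQ₂).trans (hQ₁ ▸ Set.inter_subset_left))]

lemma inter_eq_of_inter_eq (hB : W₁ ∩ W₂ = B) (h₁ : S₁ ⊆ W₁ ∩ TG.L) (h₂ : S₂ ⊆ W₂ ∩ TG.L)
    (hQ₁ : S₁ ∩ (B ∩ TG.L) = Q) (hQ₂ : S₂ ∩ (B ∩ TG.L) = Q) : S₁ ∩ S₂ = Q :=
  subset_antisymm (fun _ hv => inter_subset_of_inter_eq hB h₂ hQ₂ ⟨hv.2, (h₁ hv.1).1⟩)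
    (Set.subset_inter (hQ₁ ▸ Set.inter_subset_left) (hQ₂ ▸ Set.inter_subset_left))

lemma neighborSet_inter_union_eq_left (hB : W₁ ∩ W₂ = B) (hsep : IsSeparation TG.G W₁ W₂)
    (h₂ : S₂ ⊆ W₂ ∩ TG.L) (hQ₁ : S₁ ∩ (B ∩ TG.L) = Q) (hQ₂ : S₂ ∩ (B ∩ TG.L) = Q)
    (hc : c ∈ W₁ \ W₂) : TG.G.neighborSet c ∩ (S₁ ∪ S₂) = TG.G.neighborSet c ∩ S₁ := by
  refine subset_antisymm ?_ (Set.inter_subset_inter_right _ Set.subset_union_left)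
  rintro v ⟨hcv, hv | hv⟩
  · exact ⟨hcv, hv⟩
  have hv₁ : v ∈ W₁ := by
    by_contra hv₁
    exact hsep c hc v ⟨(h₂ hv).1, hv₁⟩ hcv
  exact ⟨hcv, (hQ₁ ▸ Set.inter_subset_left) (inter_subset_of_inter_eq hB h₂ hQ₂ ⟨hv, hv₁⟩)⟩


/-- On the bag, the neighbours of `S₁` and `S₂` overlap exactly in those of `Q`, whence the
parity correction `GammaBag`; off the bag a check node lies on one side only, and its
neighbours on the other side are in `Q`. -/
lemma gammaLoc_union [Finite V] (hB : W₁ ∩ W₂ = B) (hsep : IsSeparation TG.G W₁ W₂)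
    (h₁ : S₁ ⊆ W₁ ∩ TG.L) (h₂ : S₂ ⊆ W₂ ∩ TG.L)
    (hQ₁ : S₁ ∩ (B ∩ TG.L) = Q) (hQ₂ : S₂ ∩ (B ∩ TG.L) = Q) :
    GammaLoc TG (W₁ ∪ W₂) (S₁ ∪ S₂) =
      symmDiff (symmDiff (GammaLoc TG W₁ S₁) (GammaLoc TG W₂ S₂)) (GammaBag TG (W₁ ∪ W₂) B Q) := by
  have hS₁ : S₁ ⊆ W₁ := fun _ hv => (h₁ hv).1
  have hS₂ : S₂ ⊆ W₂ := fun _ hv => (h₂ hv).1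
  have hQ : Q ⊆ W₁ ∪ W₂ := fun _ hv => Or.inl (hB ▸ (hQ₁ ▸ hv).2.1).1
  ext c
  rw [mem_gammaLoc_iff (Set.union_subset_union hS₁ hS₂), Set.mem_symmDiff, Set.mem_symmDiff,
    mem_gammaLoc_iff hS₁, mem_gammaLoc_iff hS₂, mem_gammaBag_iff hQ, Set.mem_union,
    Set.mem_inter_iff]
  set N := TG.G.neighborSet c
  by_cases hc₁ : c ∈ W₁ <;> by_cases hc₂ : c ∈ W₂
  · have hcB : c ∈ B := hB ▸ ⟨hc₁, hc₂⟩
    have hcard := Set.ncard_union_add_ncard_inter (N ∩ S₁) (N ∩ S₂)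
    rw [← Set.inter_union_distrib_left, ← Set.inter_inter_distrib_left,
      inter_eq_of_inter_eq hB h₁ h₂ hQ₁ hQ₂] at hcard
    have hpar := congrArg Odd hcard
    simp only [Nat.odd_add, ← Nat.not_odd_iff_even, eq_iff_iff] at hpar
    tauto
  · have hcB : c ∉ B := fun h => hc₂ (hB ▸ h).2
    rw [neighborSet_inter_union_eq_left hB hsep h₂ hQ₁ hQ₂ ⟨hc₁, hc₂⟩]
    tauto
  · have hcB : c ∉ B := fun h => hc₁ (hB ▸ h).1
    rw [Set.union_comm S₁, neighborSet_inter_union_eq_left ((Set.inter_comm _ _).trans hB)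
      hsep.symm h₁ hQ₂ hQ₁ ⟨hc₂, hc₁⟩]
    tauto
  · have hcB : c ∉ B := fun h => hc₁ (hB ▸ h).1
    tauto


lemma HasParams.inter_of_subset {R : Set V} (h : HasParams TG W B S R Q) (hBW : B ⊆ W₁)
    (hQ : Q.Nonempty) : HasParams TG W₁ B (S ∩ W₁) (GammaLoc TG W₁ (S ∩ W₁)) Q := by
  obtain ⟨-, hSW, hSQ, -⟩ := h
  have hBL : W₁ ∩ (B ∩ TG.L) = B ∩ TG.L := Set.inter_eq_right.2 (Set.inter_subset_left.trans hBW)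
  refine ⟨hQ.mono fun v hv => ?_, fun v hv => ⟨hv.2, (hSW hv.1).2⟩, ?_, rfl⟩
  · rw [← hSQ] at hv
    exact ⟨hv.1, hBW hv.2.1⟩
  · rw [Set.inter_assoc, hBL, hSQ]

lemma bijOn_union [Finite V] {R' : Set V} (hB : W₁ ∩ W₂ = B) (hsep : IsSeparation TG.G W₁ W₂)
    (hQ : Q.Nonempty) :
    Set.BijOn (fun p : Set V × Set V => p.1 ∪ p.2)
      {p : Set V × Set V | ∃ R₁ R₂ : Set V,
        symmDiff (symmDiff R₁ R₂) (GammaBag TG (W₁ ∪ W₂) B Q) = R' ∧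
        HasParams TG W₁ B p.1 R₁ Q ∧ HasParams TG W₂ B p.2 R₂ Q}
      {S : Set V | HasParams TG (W₁ ∪ W₂) B S R' Q} := by
  have hB' : W₂ ∩ W₁ = B := (Set.inter_comm _ _).trans hB
  refine ⟨?_, ?_, ?_⟩
  · rintro ⟨S₁, S₂⟩ ⟨R₁, R₂, hR, ⟨hne, h₁, hQ₁, rfl⟩, ⟨-, h₂, hQ₂, rfl⟩⟩
    refine ⟨hne.mono Set.subset_union_left, ?_, ?_, ?_⟩
    · rw [Set.union_inter_distrib_right]
      exact Set.union_subset_union h₁ h₂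
    · rw [Set.union_inter_distrib_right, hQ₁, hQ₂, Set.union_self]
    · rwa [gammaLoc_union hB hsep h₁ h₂ hQ₁ hQ₂]
  · rintro ⟨S₁, S₂⟩ ⟨_, _, -, ⟨-, h₁, hQ₁, -⟩, ⟨-, h₂, hQ₂, -⟩⟩
      ⟨S₁', S₂'⟩ ⟨_, _, -, ⟨-, h₁', hQ₁', -⟩, ⟨-, h₂', hQ₂', -⟩⟩ (heq : S₁ ∪ S₂ = S₁' ∪ S₂')
    have e₁ : S₁ = S₁' := calc
      S₁ = (S₁ ∪ S₂) ∩ W₁ := (union_inter_eq_left hB h₁ h₂ hQ₁ hQ₂).symm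
      _ = (S₁' ∪ S₂') ∩ W₁ := by rw [heq]
      _ = S₁' := union_inter_eq_left hB h₁' h₂' hQ₁' hQ₂'
    have e₂ : S₂ = S₂' := calc
      S₂ = (S₂ ∪ S₁) ∩ W₂ := (union_inter_eq_left hB' h₂ h₁ hQ₂ hQ₁).symm
      _ = (S₂' ∪ S₁') ∩ W₂ := by rw [Set.union_comm, heq, Set.union_comm]
      _ = S₂' := union_inter_eq_left hB' h₂' h₁' hQ₂' hQ₁'
    rw [e₁, e₂]
  · intro S hS
    have hS₁ := hS.inter_of_subset (hB ▸ Set.inter_subset_left) hQ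
    have hS₂ := hS.inter_of_subset (hB ▸ Set.inter_subset_right) hQ
    have hsplit : S ∩ W₁ ∪ S ∩ W₂ = S :=
      by rw [← Set.inter_union_distrib_left, Set.inter_eq_left.2 fun _ hv => (hS.2.1 hv).1]
    refine ⟨(S ∩ W₁, S ∩ W₂), ⟨_, _, ?_, hS₁, hS₂⟩, hsplit⟩
    rw [← gammaLoc_union hB hsep hS₁.2.1 hS₂.2.1 hS₁.2.2.1 hS₂.2.2.1, hsplit, hS.2.2.2]

lemma ncard_union_of_hasParams [Finite V] {R₁ R₂ : Set V} (hB : W₁ ∩ W₂ = B)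
    (h₁ : HasParams TG W₁ B S₁ R₁ Q) (h₂ : HasParams TG W₂ B S₂ R₂ Q) :
    (S₁ ∪ S₂).ncard = S₁.ncard + S₂.ncard - Q.ncard := by
  have hcard := Set.ncard_union_add_ncard_inter S₁ S₂
  rw [inter_eq_of_inter_eq hB h₁.2.1 h₂.2.1 h₁.2.2.1 h₂.2.2.1] at hcard
  omega

end TannerJoin

theorem stmt_16_general {V ι : Type*} [Fintype V]
    (TG : TannerGraph V) (T : SimpleGraph ι) (root : ι) (B : ι → Set V)
    (hD : IsRootedTreeDecomp TG.G T root B)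
    (t t1 t2 : ι)
    (hc1 : IsChildOf T root t1 t) (hc2 : IsChildOf T root t2 t) (hne : t1 ≠ t2)
    (honly : ∀ s, IsChildOf T root s t → s = t1 ∨ s = t2)
    (hB1 : B t = B t1) (hB2 : B t = B t2)
    (R' Q : Set V)
    (hQne : Q.Nonempty) :
    Set.BijOn (fun p : Set V × Set V => p.1 ∪ p.2)
      {p : Set V × Set V | ∃ R1 R2 : Set V,
        symmDiff (symmDiff R1 R2) (GammaBag TG (subVerts T root B t) (B t) Q) = R' ∧
        HasParams TG (subVerts T root B t1) (B t1) p.1 R1 Q ∧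
        HasParams TG (subVerts T root B t2) (B t2) p.2 R2 Q}
      {S : Set V | HasParams TG (subVerts T root B t) (B t) S R' Q} ∧
    ∀ p : Set V × Set V,
      p ∈ {p : Set V × Set V | ∃ R1 R2 : Set V,
        symmDiff (symmDiff R1 R2) (GammaBag TG (subVerts T root B t) (B t) Q) = R' ∧
        HasParams TG (subVerts T root B t1) (B t1) p.1 R1 Q ∧
        HasParams TG (subVerts T root B t2) (B t2) p.2 R2 Q} →
      (p.1 ∪ p.2).ncard = p.1.ncard + p.2.ncard - Q.ncard := by
  have hunion := subVerts_eq_union_of_isChildOf hD.isTree hc1 hc2 honly hB1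
  have hinter := subVerts_inter_eq_bag hD hc1 hc2 hne hB1 hB2
  have hsep := isSeparation_subVerts hD hc1 hc2 hne hB1 hB2
  rw [← hB1, ← hB2, hunion]
  exact ⟨bijOn_union hinter hsep hQne,
    fun _ ⟨_, _, _, h₁, h₂⟩ => ncard_union_of_hasParams hinter h₁ h₂⟩

/-- at a join node, `(S_{t1}, S_{t2}) ↦ S_{t1} ∪ S_{t2}` is a
bijection from compatible pairs onto the trapping sets with parameters
`(R', Q)` in `G_t`, and the sizes add up with overlap `|Q|`. -/
theorem stmt_16 {V ι : Type*} [Fintype V] [Fintype ι]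
    (TG : TannerGraph V) (T : SimpleGraph ι) (root : ι) (B : ι → Set V)
    (hD : IsRootedTreeDecomp TG.G T root B)
    (t t1 t2 : ι)
    (hc1 : IsChildOf T root t1 t) (hc2 : IsChildOf T root t2 t) (hne : t1 ≠ t2)
    (honly : ∀ s, IsChildOf T root s t → s = t1 ∨ s = t2)
    (hB1 : B t = B t1) (hB2 : B t = B t2)
    (R' Q : Set V) (hR' : R' ⊆ B t ∩ TG.R) (hQ : Q ⊆ B t ∩ TG.L)
    (hQne : Q.Nonempty) :
    Set.BijOn (fun p : Set V × Set V => p.1 ∪ p.2)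
      {p : Set V × Set V | ∃ R1 R2 : Set V,
        symmDiff (symmDiff R1 R2) (GammaBag TG (subVerts T root B t) (B t) Q) = R' ∧
        HasParams TG (subVerts T root B t1) (B t1) p.1 R1 Q ∧
        HasParams TG (subVerts T root B t2) (B t2) p.2 R2 Q}
      {S : Set V | HasParams TG (subVerts T root B t) (B t) S R' Q} ∧
    ∀ p : Set V × Set V,
      p ∈ {p : Set V × Set V | ∃ R1 R2 : Set V,
        symmDiff (symmDiff R1 R2) (GammaBag TG (subVerts T root B t) (B t) Q) = R' ∧
        HasParams TG (subVerts T root B t1) (B t1) p.1 R1 Q ∧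
        HasParams TG (subVerts T root B t2) (B t2) p.2 R2 Q} →
      (p.1 ∪ p.2).ncard = p.1.ncard + p.2.ncard - Q.ncard :=
  stmt_16_general TG T root B hD t t1 t2 hc1 hc2 hne honly hB1 hB2 R' Q hQne
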